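/- If G is obtained by a join of H1 and H2 on vertices v1, v2 of degree at most three, H1 − v1 and H2 − v2 are connected, and H1 or H2 contains K_{3,3} as an immersion, then G contains K_{3,3} as an immersion. -/

import Mathlib

/-- A finite multigraph without loops: vertices `V`, edges `E`,
each edge has an unordered pair of distinct endpoints. -/
structure Multigraph where
  V : Type
  E : Type
  [fV : Fintype V]
  [fE : Fintype E]
  [dV : DecidableEq V]
  [dE : DecidableEq E]
  ends : E → Sym2 V
  noLoop : ∀ e, ¬ (ends e).IsDiag

attribute [instance] Multigraph.fV Multigraph.fE Multigraph.dV Multigraph.dE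

namespace Multigraph

/-- Walks in a multigraph. -/
inductive Walk (G : Multigraph) : G.V → G.V → Type
  | nil (v : G.V) : Walk G v v
  | cons {u v w : G.V} (e : G.E) (h : G.ends e = s(u, v)) (p : Walk G v w) : Walk G u w

/-- The list of edges traversed by a walk. -/
def Walk.edges {G : Multigraph} : {u v : G.V} → G.Walk u v → List G.E
  | _, _, .nil _ => []
  | _, _, .cons e _ p => e :: p.edges

/-- The list of vertices visited by a walk. -/
def Walk.support {G : Multigraph} : {u v : G.V} → G.Walk u v → List G.V
  | u, _, .nil _ => [u]
  | u, _, .cons _ _ p => u :: p.support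

/-- A walk is a path if it visits no vertex twice. -/
def Walk.IsPath {G : Multigraph} {u v : G.V} (p : G.Walk u v) : Prop := p.support.Nodup

/-- Data of an immersion of `H` into `G`: an injective map on vertices and,
for each edge of `H`, a path in `G` joining the images of its endpoints,
the paths being pairwise edge-disjoint. -/
structure ImmersionData (H G : Multigraph) where
  vmap : H.V → G.V
  inj : Function.Injective vmap
  pstart : H.E → G.V
  pend : H.E → G.V
  walk : ∀ e, G.Walk (pstart e) (pend e)
  ends_eq : ∀ e, s(pstart e, pend e) = (H.ends e).map vmap
  isPath : ∀ e, (walk e).IsPath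
  edgeDisj : ∀ e e', e ≠ e' → List.Disjoint (walk e).edges (walk e').edges

/-- `H` immerses in `G`. -/
def Immerses (H G : Multigraph) : Prop := Nonempty (ImmersionData H G)

/-- Data witnessing that `G` contains a subdivision of `H` as a subgraph
(i.e. `H` is a topological minor of `G`): as an immersion, but moreover the
paths may only meet at images of common endpoints. -/
structure SubdivisionData (H G : Multigraph) extends ImmersionData H G where
  vtxDisj : ∀ e e', e ≠ e' → ∀ x, x ∈ (walk e).support → x ∈ (walk e').support →
    ∃ w, x = vmap w ∧ w ∈ H.ends e ∧ w ∈ H.ends e'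

/-- `G` contains a subdivision of `H` as a subgraph. -/
def ContainsSubdivision (H G : Multigraph) : Prop := Nonempty (SubdivisionData H G)

/-- The complete bipartite graph `K_{3,3}`. -/
def K33 : Multigraph where
  V := Fin 3 ⊕ Fin 3
  E := Fin 3 × Fin 3
  ends e := s(Sum.inl e.1, Sum.inr e.2)
  noLoop e := by simp [Sym2.mk_isDiag_iff]

/-- The complete graph `K_5`. -/
def K5 : Multigraph where
  V := Fin 5
  E := {p : Fin 5 × Fin 5 // p.1 < p.2}
  ends e := s(e.1.1, e.1.2)
  noLoop e := by simpa [Sym2.mk_isDiag_iff] using e.2.ne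

variable (G : Multigraph)

/-- The degree of a vertex: the number of incident edges. -/
def deg (v : G.V) : ℕ := (Finset.univ.filter fun e => v ∈ G.ends e).card

/-- The multiplicity of the (possible) edge between `u` and `v`. -/
def mult (u v : G.V) : ℕ := (Finset.univ.filter fun e => G.ends e = s(u, v)).card

/-- The edge cut determined by a set `A` of vertices. -/
def cut (A : Finset G.V) : Finset G.E :=
  Finset.univ.filter fun e => ∃ u ∈ A, ∃ v ∈ Aᶜ, G.ends e = s(u, v)

/-- Every edge cut of `G` has at least `k` edges. -/
def EdgeConnGe (k : ℕ) : Prop :=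
  ∀ A : Finset G.V, A.Nonempty → A ≠ Finset.univ → k ≤ (G.cut A).card

/-- Internally 4-edge-connected: 3-edge-connected and every 3-edge cut has a
side consisting of a single vertex. -/
def Internally4EC : Prop :=
  G.EdgeConnGe 3 ∧ ∀ A : Finset G.V, A.Nonempty → A ≠ Finset.univ →
    (G.cut A).card = 3 → A.card = 1 ∨ Aᶜ.card = 1

/-- Weakly 5-edge-connected: internally 4-edge-connected and every 4-edge cut
has a side with at most two vertices. -/
def Weakly5EC : Prop :=
  G.Internally4EC ∧ ∀ A : Finset G.V, A.Nonempty → A ≠ Finset.univ →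
    (G.cut A).card = 4 → A.card ≤ 2 ∨ Aᶜ.card ≤ 2

/-- `G` is `d`-regular. -/
def IsRegular (d : ℕ) : Prop := ∀ v, G.deg v = d

/-- `G` is connected. -/
def Connected : Prop := ∀ u v : G.V, Nonempty (G.Walk u v)

/-- `v` is a cut-vertex: the remaining vertices split into two nonempty parts
with no edge between them. -/
def IsCutVertex (v : G.V) : Prop :=
  ∃ C D : Finset G.V, C.Nonempty ∧ D.Nonempty ∧ Disjoint C D ∧ v ∉ C ∧ v ∉ D ∧
    (∀ x : G.V, x ∈ C ∪ D ∨ x = v) ∧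
    ∀ e : G.E, ¬ ∃ u ∈ C, ∃ w ∈ D, G.ends e = s(u, w)

/-- `G` is 2-connected. -/
def TwoConnected : Prop :=
  G.Connected ∧ 3 ≤ Fintype.card G.V ∧ ∀ v, ¬ G.IsCutVertex v

/-- Planarity, via Kuratowski's characterization: no subdivision of `K_5`
nor of `K_{3,3}` as a subgraph. -/
def Planar : Prop := ¬ ContainsSubdivision K5 G ∧ ¬ ContainsSubdivision K33 G

end Multigraph

lemma Sym2.isDiag_map_iff' {α β : Type*} {f : α → β} (hf : Function.Injective f)
    (s : Sym2 α) : (s.map f).IsDiag ↔ s.IsDiag := by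
  induction s using Sym2.ind with
  | _ x y => simp [Sym2.mk_isDiag_iff, hf.eq_iff]

namespace Multigraph

/-- The join of `H1` and `H2` on vertices `v1` and `v2`: remove `v1` and `v2`
and match up their incident edges via the bijection `π`, joining the
corresponding other endpoints. -/
def joinGraph (H1 H2 : Multigraph) (v1 : H1.V) (v2 : H2.V)
    (π : {e : H1.E // v1 ∈ H1.ends e} ≃ {e : H2.E // v2 ∈ H2.ends e}) :
    Multigraph where
  V := {x : H1.V // x ≠ v1} ⊕ {x : H2.V // x ≠ v2}
  E := {e : H1.E // v1 ∉ H1.ends e} ⊕ {e : H2.E // v2 ∉ H2.ends e}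
       ⊕ {e : H1.E // v1 ∈ H1.ends e}
  ends e := match e with
    | .inl e => ((H1.ends e.1).attachWith (P := fun x => x ≠ v1)
        (fun _ hx hEq => e.2 (hEq ▸ hx))).map Sum.inl
    | .inr (.inl e) => ((H2.ends e.1).attachWith (P := fun x => x ≠ v2)
        (fun _ hx hEq => e.2 (hEq ▸ hx))).map Sum.inr
    | .inr (.inr e) =>
        s(Sum.inl ⟨Sym2.Mem.other' e.2, fun hEq => H1.noLoop e.1
            (by rw [← Sym2.other_spec' e.2, hEq]; exact Sym2.mk_isDiag_iff.mpr rfl)⟩,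
          Sum.inr ⟨Sym2.Mem.other' (π e).2, fun hEq => H2.noLoop (π e).1
            (by rw [← Sym2.other_spec' (π e).2, hEq]; exact Sym2.mk_isDiag_iff.mpr rfl)⟩)
  noLoop e := match e with
    | .inl e => by
        intro hd
        apply H1.noLoop e.1
        rw [← Sym2.attachWith_map_subtypeVal (s := H1.ends e.1) (P := fun x => x ≠ v1) (fun _ hx hEq => e.2 (hEq ▸ hx))]
        exact (Sym2.isDiag_map_iff' Subtype.val_injective _).mpr
          ((Sym2.isDiag_map_iff' Sum.inl_injective _).mp hd)
    | .inr (.inl e) => by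
        intro hd
        apply H2.noLoop e.1
        rw [← Sym2.attachWith_map_subtypeVal (s := H2.ends e.1) (P := fun x => x ≠ v2) (fun _ hx hEq => e.2 (hEq ▸ hx))]
        exact (Sym2.isDiag_map_iff' Subtype.val_injective _).mpr
          ((Sym2.isDiag_map_iff' Sum.inr_injective _).mp hd)
    | .inr (.inr e) => by simp [Sym2.mk_isDiag_iff]

end Multigraph

namespace Multigraph

/-- `G − v` is connected: any two vertices other than `v` are joined by a walk
avoiding `v`. -/
def ConnectedAvoiding (G : Multigraph) (v : G.V) : Prop :=
  ∀ x y : G.V, x ≠ v → y ≠ v → ∃ p : G.Walk x y, v ∉ p.support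

end Multigraph


/-! By the symmetry of the join we may assume that `K_{3,3}` immerses in `H1`.
If `v1` is not a branch vertex, a path of the immersion through `v1` uses two of the at most three
edges at `v1`, so at most one path passes through it; that passage is rerouted through the
connected graph `H2 - v2`. If `v1` is the image of a branch vertex `w`, the three paths leaving `w`
use up all edges at `v1`, so no other path meets `v1`; then `w` is moved to a vertex `m` of
`H2 - v2` joined to the far ends of the three crossing edges by edge-disjoint walks (`m` is where a
path between two of these ends is first hit from the third). Walks suffice throughout, since every
walk contains a path using a subset of its edges. -/

lemma injective_dite_inr_inl {α β γ : Type*} [DecidableEq β] {g : α → β}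
    (hg : Function.Injective g) {b : β} (c : γ) :
    Function.Injective fun a =>
      if h : g a = b then (.inr c : {y // y ≠ b} ⊕ γ) else .inl ⟨g a, h⟩ := by
  intro a a' haa'
  by_cases ha : g a = b <;> by_cases ha' : g a' = b <;>
    simp only [ha, ha', dite_true, dite_false, reduceCtorEq, Sum.inl.injEq,
      Subtype.mk.injEq] at haa'
  · exact hg (ha.trans ha'.symm)
  · exact hg haa'

namespace Multigraph

variable {G G' : Multigraph}

namespace Walk

def append : {u v w : G.V} → G.Walk u v → G.Walk v w → G.Walk u w
  | _, _, _, .nil _, q => q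
  | _, _, _, .cons e h p, q => .cons e h (p.append q)

def reverse : {u v : G.V} → G.Walk u v → G.Walk v u
  | _, _, .nil u => .nil u
  | _, _, .cons e h p => p.reverse.append (.cons e (h.trans Sym2.eq_swap) (.nil _))

@[simp] lemma support_nil (v : G.V) : (Walk.nil (G := G) v).support = [v] := rfl

@[simp] lemma edges_nil (v : G.V) : (Walk.nil (G := G) v).edges = [] := rfl

@[simp] lemma support_cons {u v w : G.V} (e : G.E) (h : G.ends e = s(u, v)) (p : G.Walk v w) :
    (Walk.cons e h p).support = u :: p.support := rfl

@[simp] lemma edges_cons {u v w : G.V} (e : G.E) (h : G.ends e = s(u, v)) (p : G.Walk v w) :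
    (Walk.cons e h p).edges = e :: p.edges := rfl

lemma support_eq_cons : {u v : G.V} → (p : G.Walk u v) → p.support = u :: p.support.tail
  | _, _, .nil _ => rfl
  | _, _, .cons _ _ _ => rfl

lemma start_mem_support {u v : G.V} (p : G.Walk u v) : u ∈ p.support := by
  rw [support_eq_cons]; exact List.mem_cons_self

lemma end_mem_support : {u v : G.V} → (p : G.Walk u v) → v ∈ p.support
  | _, _, .nil _ => List.mem_singleton_self _
  | _, _, .cons _ _ p => List.mem_cons_of_mem _ p.end_mem_support

@[simp] lemma edges_append : {u v w : G.V} → (p : G.Walk u v) → (q : G.Walk v w) →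
    (p.append q).edges = p.edges ++ q.edges
  | _, _, _, .nil _, _ => rfl
  | _, _, _, .cons _ _ p, q => by simp [append, edges_append p q]

@[simp] lemma support_append : {u v w : G.V} → (p : G.Walk u v) → (q : G.Walk v w) →
    (p.append q).support = p.support ++ q.support.tail
  | _, _, _, .nil _, q => by cases q <;> rfl
  | _, _, _, .cons _ _ p, q => by simp [append, support_append p q]

@[simp] lemma edges_reverse : {u v : G.V} → (p : G.Walk u v) → p.reverse.edges = p.edges.reverse
  | _, _, .nil _ => rfl
  | _, _, .cons _ _ p => by simp [reverse, edges_reverse p]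

@[simp] lemma support_reverse : {u v : G.V} → (p : G.Walk u v) →
    p.reverse.support = p.support.reverse
  | _, _, .nil _ => rfl
  | _, _, .cons _ _ p => by simp [reverse, support_reverse p]

lemma mem_support_of_mem_edges : {u v : G.V} → (p : G.Walk u v) → {e : G.E} → {x : G.V} →
    e ∈ p.edges → x ∈ G.ends e → x ∈ p.support
  | _, _, .nil _, _, _, he, _ => by simp at he
  | _, _, .cons e' h p, e, x, he, hx => by
    rcases List.mem_cons.mp he with rfl | he
    · rw [h, Sym2.mem_iff] at hx
      rcases hx with rfl | rfl
      · exact List.mem_cons_self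
      · exact List.mem_cons_of_mem _ p.start_mem_support
    · exact List.mem_cons_of_mem _ (p.mem_support_of_mem_edges he hx)

lemma edges_nodup_of_isPath : {u v : G.V} → (p : G.Walk u v) → p.IsPath → p.edges.Nodup
  | _, _, .nil _, _ => List.nodup_nil
  | u, _, .cons e h p, hp => by
    rw [IsPath, support_cons, List.nodup_cons] at hp
    exact List.nodup_cons.mpr
      ⟨fun he => hp.1 (p.mem_support_of_mem_edges he (h ▸ Sym2.mem_mk_left u _)),
        p.edges_nodup_of_isPath hp.2⟩

lemma exists_split {x y : G.V} (p : G.Walk x y) {v : G.V} (hv : v ∈ p.support) :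
    ∃ (p₁ : G.Walk x v) (p₂ : G.Walk v y),
      p.edges = p₁.edges ++ p₂.edges ∧ p.support = p₁.support ++ p₂.support.tail := by
  induction p with
  | nil u =>
    obtain rfl : v = u := List.mem_singleton.mp hv
    exact ⟨.nil v, .nil v, rfl, rfl⟩
  | @cons a _ _ e h p ih =>
    by_cases hva : v = a
    · subst hva
      exact ⟨.nil v, .cons e h p, rfl, rfl⟩
    · obtain ⟨q₁, q₂, h₁, h₂⟩ := ih ((List.mem_cons.mp hv).resolve_left hva)
      exact ⟨.cons e h q₁, q₂, by simp [h₁], by simp [h₂]⟩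

lemma exists_isPath_edges_subset {x y : G.V} (p : G.Walk x y) :
    ∃ q : G.Walk x y, q.IsPath ∧ q.edges ⊆ p.edges := by
  induction p with
  | nil u => exact ⟨.nil u, List.nodup_singleton u, List.Subset.refl _⟩
  | @cons a _ _ e h p ih =>
    obtain ⟨q, hq, hqp⟩ := ih
    by_cases ha : a ∈ q.support
    · -- shortcut: keep only the part of `q` after its visit to `a`
      obtain ⟨q₁, q₂, hE, hS⟩ := q.exists_split ha
      have hnd : (q₁.support ++ q₂.support.tail).Nodup := hS ▸ hq
      refine ⟨q₂, ?_, fun f hf =>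
        List.mem_cons_of_mem _ (hqp (hE ▸ List.mem_append_right _ hf))⟩
      rw [IsPath, q₂.support_eq_cons]
      exact List.nodup_cons.mpr ⟨List.disjoint_of_nodup_append hnd q₁.end_mem_support,
        hnd.of_append_right⟩
    · exact ⟨.cons e h q, List.nodup_cons.mpr ⟨ha, hq⟩, List.cons_subset_cons _ hqp⟩

lemma exists_edges_subset_of_sym2_eq {x y a b : G.V} (p : G.Walk x y)
    (h : s(x, y) = s(a, b)) : ∃ q : G.Walk a b, q.edges ⊆ p.edges := by
  rcases Sym2.eq_iff.mp h with ⟨rfl, rfl⟩ | ⟨rfl, rfl⟩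
  · exact ⟨p, List.Subset.refl _⟩
  · exact ⟨p.reverse, by simp⟩

lemma exists_prefix_notMem_support {x y v : G.V} (p : G.Walk x y) (hv : v ∈ p.support)
    (hx : x ≠ v) : ∃ (a : G.V) (f : G.E), G.ends f = s(a, v) ∧ f ∈ p.edges ∧
      ∃ r : G.Walk x a, v ∉ r.support ∧ r.edges ⊆ p.edges := by
  induction p with
  | nil u => exact absurd (List.mem_singleton.mp hv).symm hx
  | @cons _ b _ e h p ih =>
    by_cases hb : b = v
    · subst hb
      exact ⟨_, e, h, List.mem_cons_self, .nil _, by simpa using hx.symm, by simp⟩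
    · obtain ⟨a, f, hf, hfp, r, hr, hrp⟩ := ih ((List.mem_cons.mp hv).resolve_left hx.symm) hb
      exact ⟨a, f, hf, List.mem_cons_of_mem _ hfp, .cons e h r,
        by simpa [not_or] using ⟨hx.symm, hr⟩, List.cons_subset_cons _ hrp⟩

lemma exists_prefix_until {x y : G.V} (p : G.Walk x y) (P : G.V → Prop)
    (h : ∃ z ∈ p.support, P z) :
    ∃ (m : G.V) (q : G.Walk x m), P m ∧ q.edges ⊆ p.edges ∧
      ∀ z ∈ q.support, P z → z = m := by
  induction p with
  | nil u =>
    obtain ⟨z, hz, hPz⟩ := h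
    obtain rfl := List.mem_singleton.mp hz
    exact ⟨z, .nil z, hPz, List.Subset.refl _, by simp⟩
  | @cons a _ _ e h' p ih =>
    by_cases hPa : P a
    · exact ⟨a, .nil a, hPa, List.nil_subset _, by simp⟩
    · obtain ⟨z, hz, hPz⟩ := h
      obtain ⟨m, q, hm, hqp, hfirst⟩ :=
        ih ⟨z, (List.mem_cons.mp hz).resolve_left (fun h => hPa (h ▸ hPz)), hPz⟩
      refine ⟨m, .cons e h' q, hm, List.cons_subset_cons _ hqp, fun z hz hPz => ?_⟩
      rcases List.mem_cons.mp hz with rfl | hz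
      · exact absurd hPz hPa
      · exact hfirst z hz hPz

end Walk

lemma exists_mem_ends_ne (e : G.E) (m : G.V) : ∃ z ∈ G.ends e, z ≠ m := by
  obtain ⟨⟨x, y⟩, hxy⟩ := Quot.exists_rep (G.ends e)
  have hne : x ≠ y := fun h => G.noLoop e (hxy ▸ Sym2.mk_isDiag_iff.mpr h)
  by_cases hx : x = m
  · exact ⟨y, hxy ▸ Sym2.mem_mk_right x y, hx ▸ hne.symm⟩
  · exact ⟨x, hxy ▸ Sym2.mem_mk_left x y, hx⟩

lemma Connected.exists_median (hG : G.Connected) (t : Fin 3 → G.V) :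
    ∃ (m : G.V) (W : ∀ j, G.Walk (t j) m),
      Pairwise fun i j => (W i).edges.Disjoint (W j).edges := by
  obtain ⟨Q, hQ, -⟩ := (hG (t 0) (t 1)).some.exists_isPath_edges_subset
  obtain ⟨m, R, hmQ, -, hfirst⟩ := (hG (t 2) (t 0)).some.exists_prefix_until (· ∈ Q.support)
    ⟨t 0, Walk.end_mem_support _, Q.start_mem_support⟩
  obtain ⟨A, B, hAB, -⟩ := Q.exists_split hmQ
  have hAB' : A.edges.Disjoint B.edges :=
    List.disjoint_of_nodup_append (hAB ▸ Q.edges_nodup_of_isPath hQ)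
  -- an edge of `R` on `Q` would have both ends on `R` and `Q`, hence both equal to `m`
  have hRQ : ∀ f ∈ R.edges, f ∉ Q.edges := by
    intro f hfR hfQ
    obtain ⟨z, hz, hzm⟩ := exists_mem_ends_ne f m
    exact hzm (hfirst z (R.mem_support_of_mem_edges hfR hz) (Q.mem_support_of_mem_edges hfQ hz))
  have hAR : A.edges.Disjoint R.edges := fun f hA hR =>
    hRQ f hR (hAB ▸ List.mem_append_left _ hA)
  have hBR : B.edges.Disjoint R.edges := fun f hB hR =>
    hRQ f hR (hAB ▸ List.mem_append_right _ hB)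
  let L : Fin 3 → List G.E := ![A.edges, B.reverse.edges, R.edges]
  have hL : ∀ j, ∃ W : G.Walk (t j) m, W.edges = L j := by
    intro j
    fin_cases j
    exacts [⟨A, rfl⟩, ⟨B.reverse, rfl⟩, ⟨R, rfl⟩]
  choose W hW using hL
  refine ⟨m, W, fun i j hij => ?_⟩
  change (W i).edges.Disjoint (W j).edges
  rw [hW, hW]
  fin_cases i <;> fin_cases j <;>
    simp_all [L, List.disjoint_reverse_left, List.disjoint_comm]

lemma card_le_deg {v : G.V} {s : Finset G.E} (h : ∀ e ∈ s, v ∈ G.ends e) :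
    s.card ≤ G.deg v :=
  Finset.card_le_card fun e he => Finset.mem_filter.mpr ⟨Finset.mem_univ e, h e he⟩

lemma mem_range_of_deg_le {ι : Type*} [Fintype ι] {v : G.V} {f : ι → G.E}
    (hf : Function.Injective f) (hv : ∀ i, v ∈ G.ends (f i))
    (hdeg : G.deg v ≤ Fintype.card ι)
    {g : G.E} (hg : v ∈ G.ends g) : g ∈ Set.range f := by
  have himage : Finset.univ.image f = Finset.univ.filter (v ∈ G.ends ·) :=
    Finset.eq_of_subset_of_card_le
      (fun e he => by obtain ⟨i, -, rfl⟩ := Finset.mem_image.mp he; simp [hv])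
      (by rw [Finset.card_image_of_injective _ hf, Finset.card_univ]; exact hdeg)
  obtain ⟨i, -, rfl⟩ :=
    Finset.mem_image.mp (himage ▸ Finset.mem_filter.mpr ⟨Finset.mem_univ g, hg⟩)
  exact ⟨i, rfl⟩

lemma Walk.two_le_card_edges_mem_ends {x y v : G.V} (p : G.Walk x y) (hp : p.IsPath)
    (hv : v ∈ p.support) (hx : x ≠ v) (hy : y ≠ v) :
    2 ≤ (p.edges.toFinset.filter (v ∈ G.ends ·)).card := by
  obtain ⟨p₁, p₂, hE, -⟩ := p.exists_split hv
  obtain ⟨_, f, hf, hfp, -⟩ := p₁.exists_prefix_notMem_support p₁.end_mem_support hx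
  obtain ⟨_, g, hg, hgp, -⟩ :=
    p₂.reverse.exists_prefix_notMem_support p₂.reverse.end_mem_support hy
  rw [Walk.edges_reverse, List.mem_reverse] at hgp
  have hfg : f ≠ g := fun h =>
    List.disjoint_of_nodup_append (hE ▸ p.edges_nodup_of_isPath hp) hfp (h ▸ hgp)
  calc 2 = ({f, g} : Finset G.E).card := (Finset.card_pair hfg).symm
    _ ≤ _ := Finset.card_le_card (by
      simp [Finset.insert_subset_iff, hE, hfp, hgp, hf, hg])

lemma ImmersionData.pstart_ne {H : Multigraph} (imm : ImmersionData H G) {e : H.E} {v : G.V}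
    (hv : ∀ u ∈ H.ends e, imm.vmap u ≠ v) : imm.pstart e ≠ v := by
  obtain ⟨u, hu, hpu⟩ := Sym2.mem_map.mp (imm.ends_eq e ▸ Sym2.mem_mk_left _ _)
  exact hpu ▸ hv u hu

lemma ImmersionData.pend_ne {H : Multigraph} (imm : ImmersionData H G) {e : H.E} {v : G.V}
    (hv : ∀ u ∈ H.ends e, imm.vmap u ≠ v) : imm.pend e ≠ v := by
  obtain ⟨u, hu, hpu⟩ := Sym2.mem_map.mp (imm.ends_eq e ▸ Sym2.mem_mk_right _ _)
  exact hpu ▸ hv u hu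

lemma ImmersionData.eq_of_mem_support {H : Multigraph} (imm : ImmersionData H G) {v : G.V}
    (hv : v ∉ Set.range imm.vmap) (hd : G.deg v ≤ 3) {e e' : H.E}
    (he : v ∈ (imm.walk e).support) (he' : v ∈ (imm.walk e').support) : e = e' := by
  by_contra hne
  let A : H.E → Finset G.E := fun e => (imm.walk e).edges.toFinset.filter (v ∈ G.ends ·)
  have two_le : ∀ e, v ∈ (imm.walk e).support → 2 ≤ (A e).card := fun e he =>
    (imm.walk e).two_le_card_edges_mem_ends (imm.isPath e) he
      (imm.pstart_ne fun u _ h => hv ⟨u, h⟩) (imm.pend_ne fun u _ h => hv ⟨u, h⟩)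
  have hdisj : Disjoint (A e) (A e') := Finset.disjoint_left.mpr fun f hf hf' =>
    imm.edgeDisj e e' hne (List.mem_toFinset.mp (Finset.mem_filter.mp hf).1)
      (List.mem_toFinset.mp (Finset.mem_filter.mp hf').1)
  have hle : (A e ∪ A e').card ≤ G.deg v := card_le_deg fun f hf => by
    rcases Finset.mem_union.mp hf with hf | hf <;> exact (Finset.mem_filter.mp hf).2
  rw [Finset.card_union_of_disjoint hdisj] at hle
  have := two_le e he
  have := two_le e' he'
  omega

lemma immerses_of_walks {H : Multigraph} {β : Type*} (vmap : H.V → G.V)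
    (hinj : Function.Injective vmap) (o : G.E → β) (S : H.E → Set β)
    (hS : Pairwise fun e e' => Disjoint (S e) (S e'))
    (hW : ∀ e, ∃ (a b : G.V) (W : G.Walk a b),
      s(a, b) = (H.ends e).map vmap ∧ ∀ z ∈ W.edges, o z ∈ S e) :
    Immerses H G := by
  choose a b W hends hWS using hW
  choose P hP hPW using fun e => (W e).exists_isPath_edges_subset
  exact ⟨⟨vmap, hinj, a, b, P, hends, hP, fun e e' hne z hz hz' =>
    Set.disjoint_left.mp (hS hne) (hWS e z (hPW e hz)) (hWS e' z (hPW e' hz'))⟩⟩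

structure Hom (G G' : Multigraph) where
  onV : G.V → G'.V
  onE : G.E → G'.E
  ends_onE : ∀ e, G'.ends (onE e) = (G.ends e).map onV

def Walk.map (φ : Hom G G') : {u v : G.V} → G.Walk u v → G'.Walk (φ.onV u) (φ.onV v)
  | _, _, .nil u => .nil _
  | _, _, .cons e h p => .cons (φ.onE e) (by rw [φ.ends_onE, h, Sym2.map_mk]) (p.map φ)

@[simp] lemma Walk.edges_map (φ : Hom G G') :
    {u v : G.V} → (p : G.Walk u v) → (p.map φ).edges = p.edges.map φ.onE
  | _, _, .nil _ => rfl
  | _, _, .cons _ _ p => by simp [Walk.map, p.edges_map φ]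

lemma Immerses.of_hom {H : Multigraph} (h : Immerses H G) (φ : Hom G G')
    (hV : Function.Injective φ.onV) (hE : Function.Injective φ.onE) : Immerses H G' := by
  obtain ⟨imm⟩ := h
  refine immerses_of_walks (φ.onV ∘ imm.vmap) (hV.comp imm.inj) id
    (fun e => φ.onE '' {z | z ∈ (imm.walk e).edges})
    (fun e e' hne => (Set.disjoint_image_iff hE).mpr
      (Set.disjoint_left.mpr fun z hz hz' => imm.edgeDisj e e' hne hz hz'))
    fun e => ⟨_, _, (imm.walk e).map φ, ?_, ?_⟩
  · rw [← Sym2.map_mk, imm.ends_eq, Sym2.map_map]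
  · intro z hz
    rw [Walk.edges_map, List.mem_map] at hz
    obtain ⟨z, hz, rfl⟩ := hz
    exact Set.mem_image_of_mem _ hz

abbrev deleteVertex (G : Multigraph) (v : G.V) : Multigraph where
  V := {x : G.V // x ≠ v}
  E := {e : G.E // v ∉ G.ends e}
  ends e := (G.ends e.1).attachWith (P := fun x => x ≠ v) (fun _ hx hEq => e.2 (hEq ▸ hx))
  noLoop e hd := G.noLoop e.1 (by
    rw [← Sym2.attachWith_map_subtypeVal (s := G.ends e.1) (P := fun x => x ≠ v)
      (fun _ hx hEq => e.2 (hEq ▸ hx))]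
    exact (Sym2.isDiag_map_iff' Subtype.val_injective _).mpr hd)

lemma deleteVertex_ends_eq {v : G.V} {e : (G.deleteVertex v).E} {x y : (G.deleteVertex v).V}
    (h : G.ends e.1 = s(x.1, y.1)) : (G.deleteVertex v).ends e = s(x, y) :=
  Sym2.map.injective Subtype.val_injective ((Sym2.attachWith_map_subtypeVal _).trans h)

def Walk.toDeleteVertex {v : G.V} : {x y : G.V} → (p : G.Walk x y) → (h : v ∉ p.support) →
    (G.deleteVertex v).Walk ⟨x, ne_of_mem_of_not_mem p.start_mem_support h⟩
      ⟨y, ne_of_mem_of_not_mem p.end_mem_support h⟩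
  | _, _, .nil _, _ => .nil _
  | _, _, .cons e he p, h =>
    .cons ⟨e, by
        rw [he, Sym2.mem_iff, not_or]
        exact ⟨fun hv => h (by rw [hv]; exact List.mem_cons_self),
          fun hv => h (by rw [hv]; exact List.mem_cons_of_mem _ p.start_mem_support)⟩⟩
      (deleteVertex_ends_eq he) (p.toDeleteVertex fun hv => h (List.mem_cons_of_mem _ hv))

@[simp] lemma Walk.edges_toDeleteVertex {v : G.V} : {x y : G.V} → (p : G.Walk x y) →
    (h : v ∉ p.support) → (p.toDeleteVertex h).edges.map Subtype.val = p.edges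
  | _, _, .nil _, _ => rfl
  | _, _, .cons _ _ p, _ => congrArg _ (p.edges_toDeleteVertex _)

lemma ConnectedAvoiding.connected_deleteVertex {v : G.V} (h : G.ConnectedAvoiding v) :
    (G.deleteVertex v).Connected := fun x y => by
  obtain ⟨p, hp⟩ := h x.1 y.1 x.2 y.2
  exact ⟨p.toDeleteVertex hp⟩

lemma ImmersionData.exists_mem_edges_of_deg_le {H : Multigraph} (imm : ImmersionData H G)
    {ι : Type*} [Fintype ι] {σ : ι → H.E} (hσ : Function.Injective σ) {v : G.V}
    {f : ι → G.E}
    (hfv : ∀ i, v ∈ G.ends (f i)) (hf : ∀ i, f i ∈ (imm.walk (σ i)).edges)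
    (hd : G.deg v ≤ Fintype.card ι) {g : G.E} (hg : v ∈ G.ends g) :
    ∃ i, g ∈ (imm.walk (σ i)).edges := by
  have hfinj : Function.Injective f := fun i j hij =>
    by_contra fun hne => imm.edgeDisj _ _ (hσ.ne hne) (hf i) (hij ▸ hf j)
  obtain ⟨i, rfl⟩ := mem_range_of_deg_le hfinj hfv hd hg
  exact ⟨i, hf i⟩

lemma ImmersionData.notMem_support {H : Multigraph} (imm : ImmersionData H G) {w : H.V}
    {v : G.V} (hw : imm.vmap w = v)
    (hcover : ∀ g, v ∈ G.ends g → ∃ e, w ∈ H.ends e ∧ g ∈ (imm.walk e).edges)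
    {e : H.E} (he : w ∉ H.ends e) : v ∉ (imm.walk e).support := by
  intro hv
  have hvmap : ∀ u ∈ H.ends e, imm.vmap u ≠ v := fun u hu h =>
    he (imm.inj (h.trans hw.symm) ▸ hu)
  obtain ⟨_, g, hg, hgp, -⟩ :=
    (imm.walk e).exists_prefix_notMem_support hv (imm.pstart_ne hvmap)
  obtain ⟨e', he', hge'⟩ := hcover g (hg ▸ Sym2.mem_mk_right _ _)
  exact imm.edgeDisj e e' (fun h => he (h ▸ he')) hgp hge'

def otherEnd {v : G.V} (f : {e : G.E // v ∈ G.ends e}) : {x : G.V // x ≠ v} :=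
  ⟨Sym2.Mem.other' f.2, fun h => G.noLoop f.1 (by
    rw [← Sym2.other_spec' f.2, h]; exact Sym2.mk_isDiag_iff.mpr rfl)⟩

lemma otherEnd_eq {v a : G.V} {f : {e : G.E // v ∈ G.ends e}}
    (hf : G.ends f.1 = s(a, v)) (ha : a ≠ v) : otherEnd f = ⟨a, ha⟩ :=
  Subtype.ext (Sym2.congr_right.mp ((Sym2.other_spec' f.2).trans (hf.trans Sym2.eq_swap)))

-- Lets vertices and edges of the join unify with the underlying sums.
attribute [reducible] joinGraph

section Join

variable {H1 H2 : Multigraph} {v1 : H1.V} {v2 : H2.V}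
  (π : {e : H1.E // v1 ∈ H1.ends e} ≃ {e : H2.E // v2 ∈ H2.ends e})

abbrev joinInl : Hom (H1.deleteVertex v1) (joinGraph H1 H2 v1 v2 π) :=
  ⟨Sum.inl, Sum.inl, fun _ => rfl⟩

abbrev joinInr : Hom (H2.deleteVertex v2) (joinGraph H1 H2 v1 v2 π) :=
  ⟨Sum.inr, fun e => Sum.inr (Sum.inl e), fun _ => rfl⟩

lemma joinGraph_ends_cross (f : {e : H1.E // v1 ∈ H1.ends e}) :
    (joinGraph H1 H2 v1 v2 π).ends (Sum.inr (Sum.inr f)) =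
      s(Sum.inl (otherEnd f), Sum.inr (otherEnd (π f))) := rfl

def joinVal : (joinGraph H1 H2 v1 v2 π).V → H1.V ⊕ H2.V := Sum.map Subtype.val Subtype.val

lemma joinVal_injective : Function.Injective (joinVal π) :=
  Sum.map_injective.mpr ⟨Subtype.val_injective, Subtype.val_injective⟩

/-- A crossing edge is attributed to its half in `H1`. -/
def joinOrigin : (joinGraph H1 H2 v1 v2 π).E → H1.E ⊕ (H2.deleteVertex v2).E
  | .inl e => .inl e.1
  | .inr (.inl e) => .inr e
  | .inr (.inr f) => .inl f.1

def joinGraphSwap : Hom (joinGraph H2 H1 v2 v1 π.symm) (joinGraph H1 H2 v1 v2 π) where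
  onV := Sum.swap
  onE
    | .inl e => .inr (.inl e)
    | .inr (.inl e) => .inl e
    | .inr (.inr f) => .inr (.inr (π.symm f))
  ends_onE
    | .inl _ => (Sym2.map_map (g := Sum.swap) (f := Sum.inl) _).symm
    | .inr (.inl _) => (Sym2.map_map (g := Sum.swap) (f := Sum.inr) _).symm
    | .inr (.inr f) => by
      rw [joinGraph_ends_cross, Equiv.apply_symm_apply]
      exact Sym2.eq_swap

lemma immerses_joinGraph_symm {H : Multigraph} (h : Immerses H (joinGraph H2 H1 v2 v1 π.symm)) :
    Immerses H (joinGraph H1 H2 v1 v2 π) :=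
  h.of_hom (joinGraphSwap π) Sum.swap_leftInverse.injective (by
    rintro (a | a | a) (b | b | b) hab <;> first
      | (cases hab; rfl)
      | (injection hab with hab; injection hab with hab; rw [π.symm.injective hab])
      | cases hab)

lemma edges_map_joinInl_map_joinOrigin {x y : H1.V} (p : H1.Walk x y) (h : v1 ∉ p.support) :
    ((p.toDeleteVertex h).map (joinInl π)).edges.map (joinOrigin π) = p.edges.map Sum.inl := by
  rw [Walk.edges_map, List.map_map, ← p.edges_toDeleteVertex h, List.map_map]
  rfl

lemma edges_map_joinInr_map_joinOrigin {x y : (H2.deleteVertex v2).V}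
    (p : (H2.deleteVertex v2).Walk x y) :
    (p.map (joinInr π)).edges.map (joinOrigin π) = p.edges.map Sum.inr := by
  rw [Walk.edges_map, List.map_map]
  rfl

lemma exists_joinWalk_inl_inr {x y : H1.V} (p : H1.Walk x y) (hv : v1 ∈ p.support)
    (hx : x ≠ v1) : ∃ f : {e : H1.E // v1 ∈ H1.ends e}, f.1 ∈ p.edges ∧
      ∃ W : (joinGraph H1 H2 v1 v2 π).Walk (.inl ⟨x, hx⟩) (.inr (otherEnd (π f))),
        ∀ o ∈ W.edges.map (joinOrigin π), o.elim (· ∈ p.edges) fun _ => False := by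
  obtain ⟨a, f, hf, hfp, r, hr, hrp⟩ := p.exists_prefix_notMem_support hv hx
  have hfv : v1 ∈ H1.ends f := hf ▸ Sym2.mem_mk_right a v1
  have hcross : (joinGraph H1 H2 v1 v2 π).ends (Sum.inr (Sum.inr ⟨f, hfv⟩)) =
      s((joinInl π).onV ⟨a, ne_of_mem_of_not_mem r.end_mem_support hr⟩,
        Sum.inr (otherEnd (π ⟨f, hfv⟩))) := by
    rw [joinGraph_ends_cross, otherEnd_eq hf (ne_of_mem_of_not_mem r.end_mem_support hr)]
  let W := ((r.toDeleteVertex hr).map (joinInl π)).append (.cons _ hcross (.nil _))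
  have hW : W.edges.map (joinOrigin π) = r.edges.map Sum.inl ++ [Sum.inl f] := by
    simp only [W]
    rw [Walk.edges_append, List.map_append, edges_map_joinInl_map_joinOrigin]
    rfl
  refine ⟨⟨f, hfv⟩, hfp, W, ?_⟩
  rw [hW]
  simp only [List.forall_mem_append, List.forall_mem_map, List.forall_mem_singleton, Sum.elim_inl]
  exact ⟨fun e he => hrp he, hfp⟩

lemma exists_joinWalk_inl_inl (hconn : (H2.deleteVertex v2).Connected) {x y : H1.V}
    (p : H1.Walk x y) (hx : x ≠ v1) (hy : y ≠ v1) :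
    ∃ W : (joinGraph H1 H2 v1 v2 π).Walk (.inl ⟨x, hx⟩) (.inl ⟨y, hy⟩),
      ∀ o ∈ W.edges.map (joinOrigin π), o.elim (· ∈ p.edges) fun _ => v1 ∈ p.support := by
  by_cases hv : v1 ∈ p.support
  · obtain ⟨f, -, W₁, hW₁⟩ := exists_joinWalk_inl_inr π p hv hx
    obtain ⟨g, -, W₂, hW₂⟩ := exists_joinWalk_inl_inr π p.reverse (by simpa using hv) hy
    obtain ⟨M⟩ := hconn (otherEnd (π f)) (otherEnd (π g))
    refine ⟨W₁.append ((M.map (joinInr π)).append W₂.reverse), ?_⟩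
    rw [Walk.edges_append, Walk.edges_append, Walk.edges_reverse, List.map_append,
      List.map_append, edges_map_joinInr_map_joinOrigin, List.map_reverse]
    rintro (h | d) ho
    · rcases List.mem_append.mp ho with ho | ho
      · exact hW₁ _ ho
      rcases List.mem_append.mp ho with ho | ho
      · simp at ho
      · simpa using hW₂ _ (List.mem_reverse.mp ho)
    · exact hv
  · refine ⟨(p.toDeleteVertex hv).map (joinInl π), ?_⟩
    rw [edges_map_joinInl_map_joinOrigin]
    simp only [List.forall_mem_map, Sum.elim_inl]
    exact fun _ => id

lemma immerses_joinGraph_of_walks {H : Multigraph} (imm : ImmersionData H H1)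
    (vmap : H.V → (joinGraph H1 H2 v1 v2 π).V) (hinj : Function.Injective vmap)
    (B : H.E → (H2.deleteVertex v2).E → Prop) (hB : ∀ e e' d, B e d → B e' d → e = e')
    (hW : ∀ e, ∃ (a b : (joinGraph H1 H2 v1 v2 π).V) (W : (joinGraph H1 H2 v1 v2 π).Walk a b),
      s(a, b) = (H.ends e).map vmap ∧
        ∀ o ∈ W.edges.map (joinOrigin π), o.elim (· ∈ (imm.walk e).edges) (B e)) :
    Immerses H (joinGraph H1 H2 v1 v2 π) := by
  refine immerses_of_walks vmap hinj (joinOrigin π)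
    (fun e => {o | o.elim (· ∈ (imm.walk e).edges) (B e)}) ?_ fun e => ?_
  · intro e e' hne
    refine Set.disjoint_left.mpr ?_
    rintro (h | d) he he'
    exacts [imm.edgeDisj e e' hne he he', hne (hB e e' d he he')]
  · obtain ⟨a, b, W, hends, hWo⟩ := hW e
    exact ⟨a, b, W, hends, fun z hz => hWo _ (List.mem_map_of_mem hz)⟩

lemma mk_inl_eq_map_of_joinVal {α : Type*} {s : Sym2 α} {g : α → H1.V}
    {vmap : α → (joinGraph H1 H2 v1 v2 π).V}
    (hvmap : ∀ u ∈ s, joinVal π (vmap u) = .inl (g u))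
    {x y : H1.V} (hxy : s(x, y) = s.map g) (hx : x ≠ v1) (hy : y ≠ v1) :
    s(.inl ⟨x, hx⟩, .inl ⟨y, hy⟩) = s.map vmap := by
  apply Sym2.map.injective (joinVal_injective π)
  rw [Sym2.map_map, Sym2.map_congr (f := joinVal π ∘ vmap) (g := Sum.inl ∘ g) hvmap,
    ← Sym2.map_map, ← hxy]
  rfl

theorem immerses_joinGraph_of_notMem_range {H : Multigraph} (imm : ImmersionData H H1)
    (hv1 : v1 ∉ Set.range imm.vmap) (hd1 : H1.deg v1 ≤ 3)
    (hconn : (H2.deleteVertex v2).Connected) : Immerses H (joinGraph H1 H2 v1 v2 π) := by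
  have hnr : ∀ u, imm.vmap u ≠ v1 := fun u h => hv1 ⟨u, h⟩
  refine immerses_joinGraph_of_walks π imm (fun u => .inl ⟨imm.vmap u, hnr u⟩)
    (fun a b h => imm.inj (congrArg Subtype.val (Sum.inl_injective h)))
    (fun e _ => v1 ∈ (imm.walk e).support) (fun e e' _ => imm.eq_of_mem_support hv1 hd1)
    fun e => ?_
  have hs : imm.pstart e ≠ v1 := imm.pstart_ne fun u _ => hnr u
  have ht : imm.pend e ≠ v1 := imm.pend_ne fun u _ => hnr u
  obtain ⟨W, hW⟩ := exists_joinWalk_inl_inl π hconn (imm.walk e) hs ht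
  exact ⟨_, _, W, mk_inl_eq_map_of_joinVal π (fun _ _ => rfl) (imm.ends_eq e) hs ht, hW⟩

lemma ImmersionData.vmap_ne {H : Multigraph} (imm : ImmersionData H H1) {w : H.V}
    (hw : imm.vmap w = v1) {u : H.V} (hu : u ≠ w) : imm.vmap u ≠ v1 :=
  fun h => hu (imm.inj (h.trans hw.symm))

lemma ImmersionData.exists_joinWalk_of_vmap_eq {H : Multigraph} (imm : ImmersionData H H1)
    {w : H.V} (hw : imm.vmap w = v1) (e : {e : H.E // w ∈ H.ends e}) :
    ∃ f : {e : H1.E // v1 ∈ H1.ends e}, f.1 ∈ (imm.walk e).edges ∧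
      ∃ W : (joinGraph H1 H2 v1 v2 π).Walk
          (.inl ⟨imm.vmap (otherEnd e).1, imm.vmap_ne hw (otherEnd e).2⟩)
          (.inr (otherEnd (π f))),
        ∀ o ∈ W.edges.map (joinOrigin π),
          o.elim (· ∈ (imm.walk e).edges) fun _ => False := by
  have hends : s(imm.pstart e, imm.pend e) = s(imm.vmap (otherEnd e).1, v1) := by
    rw [imm.ends_eq, ← Sym2.other_spec' e.2, Sym2.map_mk, hw, Sym2.eq_swap]
    rfl
  obtain ⟨q, hq⟩ := (imm.walk e).exists_edges_subset_of_sym2_eq hends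
  obtain ⟨f, hf, W, hW⟩ := exists_joinWalk_inl_inr π q q.end_mem_support
    (imm.vmap_ne hw (otherEnd e).2)
  refine ⟨f, hq hf, W, ?_⟩
  rintro (h | d) ho
  exacts [hq (hW _ ho), (hW _ ho).elim]

theorem immerses_joinGraph_of_vmap_eq {H : Multigraph} (imm : ImmersionData H H1) {w : H.V}
    (hw : imm.vmap w = v1) (hdw : H.deg w = 3) (hd1 : H1.deg v1 ≤ 3)
    (hconn : (H2.deleteVertex v2).Connected) : Immerses H (joinGraph H1 H2 v1 v2 π) := by
  let σ : Fin 3 ≃ {e : H.E // w ∈ H.ends e} :=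
    (Fintype.equivFinOfCardEq (by rwa [Fintype.card_subtype])).symm
  choose f hf W hW using fun j => imm.exists_joinWalk_of_vmap_eq π hw (σ j)
  -- the three distinct edges `f j` at `v1` exhaust its degree
  have hcover : ∀ g, v1 ∈ H1.ends g → ∃ e, w ∈ H.ends e ∧ g ∈ (imm.walk e).edges := by
    intro g hg
    obtain ⟨j, hj⟩ := imm.exists_mem_edges_of_deg_le (Subtype.val_injective.comp σ.injective)
      (fun j => (f j).2) hf (by simpa using hd1) hg
    exact ⟨σ j, (σ j).2, hj⟩
  obtain ⟨m, M, hM⟩ := hconn.exists_median fun j => otherEnd (π (f j))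
  refine immerses_joinGraph_of_walks π imm
    (fun u => if h : imm.vmap u = v1 then .inr m else .inl ⟨imm.vmap u, h⟩)
    (injective_dite_inr_inl imm.inj m)
    (fun e d => ∃ j, (σ j).1 = e ∧ d ∈ (M j).edges) ?_ fun e => ?_
  · rintro e e' d ⟨i, rfl, hi⟩ ⟨j, rfl, hj⟩
    obtain rfl : i = j := by_contra fun hij => hM hij hi hj
    rfl
  by_cases he : w ∈ H.ends e
  · obtain ⟨j, rfl⟩ : ∃ j, (σ j).1 = e := ⟨σ.symm ⟨e, he⟩, by simp⟩
    refine ⟨_, _, (W j).append ((M j).map (joinInr π)), ?_, ?_⟩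
    · have hu : imm.vmap (Sym2.Mem.other' (σ j).2) ≠ v1 := imm.vmap_ne hw (otherEnd (σ j)).2
      conv_rhs => rw [← Sym2.other_spec' (σ j).2]
      rw [Sym2.map_mk, dif_pos hw, dif_neg hu, Sym2.eq_swap]
      rfl
    · rw [Walk.edges_append, List.map_append, edges_map_joinInr_map_joinOrigin]
      rintro (h | d) ho <;> rcases List.mem_append.mp ho with ho | ho
      · exact hW j _ ho
      · simp at ho
      · exact (hW j _ ho).elim
      · exact ⟨j, rfl, by simpa using ho⟩
  · have hv := imm.notMem_support hw hcover he
    have hvmap : ∀ u ∈ H.ends e, imm.vmap u ≠ v1 := fun u hu h =>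
      he (imm.inj (h.trans hw.symm) ▸ hu)
    refine ⟨_, _, ((imm.walk e).toDeleteVertex hv).map (joinInl π),
      mk_inl_eq_map_of_joinVal π (fun u hu => by rw [dif_neg (hvmap u hu)]; rfl) (imm.ends_eq e)
        (imm.pstart_ne hvmap) (imm.pend_ne hvmap), ?_⟩
    rw [edges_map_joinInl_map_joinOrigin]
    simp only [List.forall_mem_map, Sum.elim_inl]
    exact fun _ => id

theorem immerses_joinGraph_of_left {H : Multigraph} (hH : H.IsRegular 3) (hd1 : H1.deg v1 ≤ 3)
    (hconn2 : H2.ConnectedAvoiding v2) (h : Immerses H H1) :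
    Immerses H (joinGraph H1 H2 v1 v2 π) := by
  obtain ⟨imm⟩ := h
  by_cases hv : v1 ∈ Set.range imm.vmap
  · obtain ⟨w, hw⟩ := hv
    exact immerses_joinGraph_of_vmap_eq π imm hw (hH w) hd1 hconn2.connected_deleteVertex
  · exact immerses_joinGraph_of_notMem_range π imm hv hd1 hconn2.connected_deleteVertex

end Join

lemma K33_isRegular : K33.IsRegular 3 := by
  rintro (i | i) <;> fin_cases i <;> rfl

end Multigraph

open Multigraph in
theorem joinGraph_k33_of_k33_general (H1 H2 : Multigraph) (v1 : H1.V) (v2 : H2.V)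
    (π : {e : H1.E // v1 ∈ H1.ends e} ≃ {e : H2.E // v2 ∈ H2.ends e})
    (hd1 : H1.deg v1 ≤ 3) (hd2 : H2.deg v2 ≤ 3)
    (hconn1 : H1.ConnectedAvoiding v1) (hconn2 : H2.ConnectedAvoiding v2)
    (himm : Immerses K33 H1 ∨ Immerses K33 H2) :
    Immerses K33 (joinGraph H1 H2 v1 v2 π) := by
  rcases himm with h | h
  · exact immerses_joinGraph_of_left π K33_isRegular hd1 hconn2 h
  · exact immerses_joinGraph_symm π
      (immerses_joinGraph_of_left π.symm K33_isRegular hd2 hconn1 h)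

open Multigraph in
/-- If `G` is a join of `H1` and `H2` on vertices `v1`, `v2` of degree at most
three, `H1 − v1` and `H2 − v2` are connected, and `H1` or `H2` contains
`K_{3,3}` as an immersion, then so does `G`. -/
theorem joinGraph_k33_of_k33 (H1 H2 : Multigraph) (v1 : H1.V) (v2 : H2.V)
    (π : {e : H1.E // v1 ∈ H1.ends e} ≃ {e : H2.E // v2 ∈ H2.ends e})
    (hc1 : 3 ≤ Fintype.card H1.V) (hc2 : 3 ≤ Fintype.card H2.V)
    (hd1 : H1.deg v1 ≤ 3) (hd2 : H2.deg v2 ≤ 3)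
    (hconn1 : H1.ConnectedAvoiding v1) (hconn2 : H2.ConnectedAvoiding v2)
    (himm : Immerses K33 H1 ∨ Immerses K33 H2) :
    Immerses K33 (joinGraph H1 H2 v1 v2 π) :=
  joinGraph_k33_of_k33_general H1 H2 v1 v2 π hd1 hd2 hconn1 hconn2 himm
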